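/- Let G be a finite simple graph on a vertex set V with |V| = n ≥ 4 and with m edges, let c = (c_1, …, c_s) be a profile, and let Σ be the s × s covariance matrix of the random vector M = (M_1, …, M_s) under the random coloring model with profile c, i.e., Σ_{ij} = cov(M_i, M_j). Then Σ = Q + γ(G)·u·uᵀ, where u ∈ ℝ^s is the vector with entries u_i = c_i^(2) and Q is the diagonal matrix with entries q_i = Var(M_i) − γ(G)·(c_i^(2))². Moreover, if every q_i ≠ 0 and 1 + γ(G)·uᵀQ⁻¹u ≠ 0, then Σ is invertible and Σ⁻¹ = Q⁻¹ − ( γ(G) / (1 + γ(G)·uᵀQ⁻¹u) ) · (Q⁻¹u)(Q⁻¹u)ᵀ. -/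

import Mathlib

open Finset

/-- The set of colorings of `V` with `s` colors and profile `c` (fiber of color `i` has `c i`
vertices). -/
def profileColorings (V : Type*) [Fintype V] [DecidableEq V] (s : ℕ) (c : Fin s → ℕ) :
    Finset (V → Fin s) :=
  Finset.univ.filter fun f => ∀ i, (Finset.univ.filter fun v => f v = i).card = c i

/-- `monoEdges G f i` is the number of edges of `G` both of whose endpoints get color `i`
under `f`. -/
def monoEdges {V : Type*} [Fintype V] [DecidableEq V] (G : SimpleGraph V) [DecidableRel G.Adj]
    {s : ℕ} (f : V → Fin s) (i : Fin s) : ℕ :=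
  (G.edgeFinset.filter fun e => ∀ v ∈ e, f v = i).card

/-- Number of unordered pairs of distinct edges of `G` sharing a vertex. -/
def pi3 {V : Type*} [Fintype V] [DecidableEq V] (G : SimpleGraph V) [DecidableRel G.Adj] : ℕ :=
  ((G.edgeFinset.powersetCard 2).filter fun p => ∃ v, ∀ e ∈ p, v ∈ e).card

/-- The invariant `γ(G)`. -/
noncomputable def gammaG {V : Type*} [Fintype V] [DecidableEq V] (G : SimpleGraph V)
    [DecidableRel G.Adj] : ℝ :=
  2 / ((Fintype.card V).descFactorial 4) * ((G.edgeFinset.card.choose 2 : ℝ) - pi3 G)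
    - ((G.edgeFinset.card : ℝ) / ((Fintype.card V).descFactorial 2)) ^ 2

/-- Expectation under the uniform measure on colorings of profile `c` (random coloring model). -/
noncomputable def expect (V : Type*) [Fintype V] [DecidableEq V] {s : ℕ} (c : Fin s → ℕ)
    (X : (V → Fin s) → ℝ) : ℝ :=
  (∑ f ∈ profileColorings V s c, X f) / (profileColorings V s c).card

section Aux

variable {V : Type*} [Fintype V] [DecidableEq V] {s : ℕ} {c : Fin s → ℕ}

lemma mem_profileColorings_iff {f : V → Fin s} :
    f ∈ profileColorings V s c ↔ ∀ i, (Finset.univ.filter fun v => f v = i).card = c i := by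
  simp [profileColorings]

lemma comp_perm_mem (σ : Equiv.Perm V) {f : V → Fin s} (hf : f ∈ profileColorings V s c) :
    (f ∘ σ) ∈ profileColorings V s c := by
  rw [mem_profileColorings_iff] at hf ⊢
  intro i
  rw [← hf i]
  apply Finset.card_bij (fun v _ => σ v)
  · intro v hv; simp only [mem_filter, mem_univ, true_and] at hv ⊢; exact hv
  · intro a _ b _ h; exact σ.injective h
  · intro w hw
    refine ⟨σ.symm w, ?_, by simp⟩
    simp only [mem_filter, mem_univ, true_and] at hw ⊢
    simpa using hw

lemma exists_perm_comp : ∀ (k : ℕ) (t t' : Fin k ↪ V), ∃ σ : Equiv.Perm V, ∀ x, σ (t x) = t' x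
  | 0, _, _ => ⟨1, fun x => x.elim0⟩
  | (k+1), t, t' => by
    obtain ⟨σ₀, hσ₀⟩ := exists_perm_comp k ((Fin.succEmb k).trans t) ((Fin.succEmb k).trans t')
    set a := σ₀ (t 0) with ha
    set b := t' 0 with hb
    refine ⟨σ₀.trans (Equiv.swap a b), ?_⟩
    have key : ∀ x : Fin k, σ₀ (t x.succ) = t' x.succ := fun x => hσ₀ x
    intro y
    refine Fin.cases ?_ ?_ y
    · simp [Equiv.trans_apply, ← ha, ← hb]
    · intro x
      simp only [Equiv.trans_apply, key x]
      apply Equiv.swap_apply_of_ne_of_ne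
      · intro h
        rw [← key x, ha] at h
        exact (Fin.succ_ne_zero x) (t.injective (σ₀.injective h))
      · exact fun h => (Fin.succ_ne_zero x) (t'.injective (h.trans hb))

end Aux

section Aux2

variable {V : Type*} [Fintype V] [DecidableEq V] {s : ℕ} {c : Fin s → ℕ}

lemma count_comp_eq (k : ℕ) (t t' : Fin k ↪ V) (P : (Fin k → Fin s) → Prop) [DecidablePred P] :
    ((profileColorings V s c).filter fun f => P (fun x => f (t x))).card
      = ((profileColorings V s c).filter fun f => P (fun x => f (t' x))).card := by
  obtain ⟨σ, hσ⟩ := exists_perm_comp k t' t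
  refine Finset.card_bij' (fun f _ => f ∘ σ) (fun g _ => g ∘ σ.symm) ?_ ?_ ?_ ?_
  · intro f hf
    rw [Finset.mem_filter] at hf ⊢
    refine ⟨comp_perm_mem σ hf.1, ?_⟩
    have : (fun x => (f ∘ σ) (t' x)) = fun x => f (t x) := by
      funext x; simp [Function.comp, hσ x]
    rw [this]; exact hf.2
  · intro g hg
    rw [Finset.mem_filter] at hg ⊢
    refine ⟨comp_perm_mem σ.symm hg.1, ?_⟩
    have : (fun x => (g ∘ σ.symm) (t x)) = fun x => g (t' x) := by
      funext x; simp [Function.comp, ← hσ x]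
    rw [this]; exact hg.2
  · intro f _; funext v; simp
  · intro g _; funext v; simp

lemma key_count (k : ℕ) (t₀ : Fin k ↪ V) (P : (Fin k → Fin s) → Prop) [DecidablePred P] :
    (Fintype.card V).descFactorial k *
      ((profileColorings V s c).filter fun f => P (fun x => f (t₀ x))).card
      = ∑ f ∈ profileColorings V s c,
          (Finset.univ.filter fun t : Fin k ↪ V => P (fun x => f (t x))).card := by
  have h1 : (Fintype.card V).descFactorial k *
      ((profileColorings V s c).filter fun f => P (fun x => f (t₀ x))).card
      = ∑ t : Fin k ↪ V, ((profileColorings V s c).filter fun f => P (fun x => f (t x))).card := by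
    rw [Finset.sum_congr rfl fun t _ => count_comp_eq k t t₀ P]
    rw [Finset.sum_const, smul_eq_mul, Finset.card_univ, Fintype.card_embedding_eq,
      Fintype.card_fin]
  rw [h1]
  simp only [Finset.card_filter]
  exact Finset.sum_comm

end Aux2

section Aux3

variable {V : Type*} [Fintype V] [DecidableEq V] {s : ℕ}

lemma desc2 (n : ℕ) : n.descFactorial 2 = n * n - n := by
  rw [Nat.descFactorial_succ, Nat.descFactorial_one, Nat.sub_one_mul]

lemma count_pairs (f : V → Fin s) (i : Fin s) :
    (Finset.univ.filter fun t : Fin 2 ↪ V => f (t 0) = i ∧ f (t 1) = i).card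
      = ((Finset.univ.filter fun v => f v = i).card).descFactorial 2 := by
  rw [desc2, ← Finset.offDiag_card]
  apply Finset.card_bij (fun t _ => ((t 0 : V), (t 1 : V)))
  · intro t ht
    simp only [Finset.mem_filter, Finset.mem_univ, true_and] at ht
    rw [Finset.mem_offDiag]
    refine ⟨by simp [ht.1], by simp [ht.2], fun h => ?_⟩
    exact absurd (t.injective h) (by decide)
  · intro t _ t' _ h
    simp only [Prod.mk.injEq] at h
    ext x
    fin_cases x
    · exact h.1
    · exact h.2
  · rintro ⟨x, y⟩ hxy
    rw [Finset.mem_offDiag] at hxy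
    simp only [Finset.mem_filter, Finset.mem_univ, true_and] at hxy
    refine ⟨⟨![x, y], ?_⟩, ?_, rfl⟩
    · intro a b hab
      fin_cases a <;> fin_cases b <;> simp_all
    · simp only [Finset.mem_filter, Finset.mem_univ, true_and]
      exact ⟨hxy.1, hxy.2.1⟩

lemma count_quads (f : V → Fin s) {i j : Fin s} (hij : i ≠ j) :
    (Finset.univ.filter fun t : Fin 4 ↪ V =>
        f (t 0) = i ∧ f (t 1) = i ∧ f (t 2) = j ∧ f (t 3) = j).card
      = ((Finset.univ.filter fun v => f v = i).card).descFactorial 2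
        * ((Finset.univ.filter fun v => f v = j).card).descFactorial 2 := by
  rw [desc2, desc2, ← Finset.offDiag_card, ← Finset.offDiag_card, ← Finset.card_product]
  apply Finset.card_bij (fun t _ => (((t 0 : V), (t 1 : V)), ((t 2 : V), (t 3 : V))))
  · intro t ht
    simp only [Finset.mem_filter, Finset.mem_univ, true_and] at ht
    obtain ⟨h0, h1, h2, h3⟩ := ht
    rw [Finset.mem_product, Finset.mem_offDiag, Finset.mem_offDiag]
    refine ⟨⟨by simp [h0], by simp [h1], fun h => absurd (t.injective h) (by decide)⟩,
      ⟨by simp [h2], by simp [h3], fun h => absurd (t.injective h) (by decide)⟩⟩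
  · intro t _ t' _ h
    simp only [Prod.mk.injEq] at h
    ext x
    fin_cases x
    · exact h.1.1
    · exact h.1.2
    · exact h.2.1
    · exact h.2.2
  · rintro ⟨⟨x₁, x₂⟩, ⟨y₁, y₂⟩⟩ hxy
    rw [Finset.mem_product, Finset.mem_offDiag, Finset.mem_offDiag] at hxy
    simp only [Finset.mem_filter, Finset.mem_univ, true_and] at hxy
    obtain ⟨⟨hx1, hx2, hx⟩, ⟨hy1, hy2, hy⟩⟩ := hxy
    have d13 : x₁ ≠ y₁ := fun h => hij (by rw [← hx1, h, hy1])
    have d14 : x₁ ≠ y₂ := fun h => hij (by rw [← hx1, h, hy2])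
    have d23 : x₂ ≠ y₁ := fun h => hij (by rw [← hx2, h, hy1])
    have d24 : x₂ ≠ y₂ := fun h => hij (by rw [← hx2, h, hy2])
    refine ⟨⟨![x₁, x₂, y₁, y₂], ?_⟩, ?_, rfl⟩
    · intro a b hab
      fin_cases a <;> fin_cases b <;> simp_all <;> tauto
    · simp only [Finset.mem_filter, Finset.mem_univ, true_and]
      exact ⟨hx1, hx2, hy1, hy2⟩
end Aux3

section Aux4

variable {V : Type*} [Fintype V] [DecidableEq V] {s : ℕ}

lemma S2 (c : Fin s → ℕ) {a b : V} (hab : a ≠ b) (i : Fin s) :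
    (Fintype.card V).descFactorial 2 *
      ((profileColorings V s c).filter fun f => f a = i ∧ f b = i).card
      = (profileColorings V s c).card * (c i).descFactorial 2 := by
  have hinj : Function.Injective ![a, b] := by
    intro x y hxy; fin_cases x <;> fin_cases y <;> simp_all
  have h := key_count (c := c) 2 ⟨![a, b], hinj⟩ (fun g => g 0 = i ∧ g 1 = i)
  simp only [Function.Embedding.coeFn_mk, Matrix.cons_val_zero, Matrix.cons_val_one,
    Matrix.head_cons] at h
  erw [h]
  rw [Finset.sum_congr rfl fun f hf => by
    rw [count_pairs f i, mem_profileColorings_iff.1 hf i], Finset.sum_const, smul_eq_mul]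

lemma S4 (c : Fin s → ℕ) {a b a' b' : V} (h1 : a ≠ b) (h2 : a ≠ a') (h3 : a ≠ b')
    (h4 : b ≠ a') (h5 : b ≠ b') (h6 : a' ≠ b') {i j : Fin s} (hij : i ≠ j) :
    (Fintype.card V).descFactorial 4 *
      ((profileColorings V s c).filter fun f => f a = i ∧ f b = i ∧ f a' = j ∧ f b' = j).card
      = (profileColorings V s c).card * ((c i).descFactorial 2 * (c j).descFactorial 2) := by
  have hinj : Function.Injective ![a, b, a', b'] := by
    intro x y hxy; fin_cases x <;> fin_cases y <;> simp_all <;> tauto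
  have h := key_count (c := c) 4 ⟨![a, b, a', b'], hinj⟩
    (fun g => g 0 = i ∧ g 1 = i ∧ g 2 = j ∧ g 3 = j)
  simp only [Function.Embedding.coeFn_mk, Matrix.cons_val_zero, Matrix.cons_val_one,
    Matrix.head_cons, Matrix.cons_val_two, Matrix.tail_cons, Matrix.cons_val_three] at h
  rw [h, Finset.sum_congr rfl fun f hf => by
    rw [count_quads f hij, mem_profileColorings_iff.1 hf i, mem_profileColorings_iff.1 hf j],
    Finset.sum_const, smul_eq_mul]

lemma profileColorings_nonempty (c : Fin s → ℕ) (hsum : ∑ i, c i = Fintype.card V) :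
    (profileColorings V s c).Nonempty := by
  have hcard : Fintype.card ((i : Fin s) × Fin (c i)) = Fintype.card V := by
    simp [Fintype.card_sigma, hsum]
  let e := Fintype.equivOfCardEq hcard
  refine ⟨fun v => (e.symm v).1, ?_⟩
  rw [mem_profileColorings_iff]
  intro i
  have : (Finset.univ.filter fun v : V => (e.symm v).1 = i).card
      = (Finset.univ.filter fun x : (i : Fin s) × Fin (c i) => x.1 = i).card := by
    apply Finset.card_bij (fun v _ => e.symm v)
    · intro v hv; simpa using (Finset.mem_filter.1 hv).2
    · intro v _ w _ h; exact e.symm.injective h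
    · intro x hx
      exact ⟨e x, by simpa using (Finset.mem_filter.1 hx).2, by simp⟩
  rw [this, ← Fintype.card_fin (c i), ← Finset.card_univ]
  symm
  apply Finset.card_bij (fun (y : Fin (c i)) _ => (⟨i, y⟩ : (i : Fin s) × Fin (c i)))
  · intro y _; simp
  · intro y _ z _ h
    simpa using h
  · rintro ⟨j, y⟩ hx
    have hj : j = i := by simpa using (Finset.mem_filter.1 hx).2
    subst hj
    exact ⟨y, Finset.mem_univ y, rfl⟩

end Aux4


section Aux5

variable {V : Type*} [Fintype V] [DecidableEq V] {s : ℕ} (G : SimpleGraph V) [DecidableRel G.Adj]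

lemma sum_mono (c : Fin s → ℕ) (i : Fin s) :
    (Fintype.card V).descFactorial 2 * ∑ f ∈ profileColorings V s c, monoEdges G f i
      = G.edgeFinset.card * ((profileColorings V s c).card * (c i).descFactorial 2) := by
  have swap : ∑ f ∈ profileColorings V s c, monoEdges G f i
      = ∑ e ∈ G.edgeFinset, ((profileColorings V s c).filter fun f => ∀ v ∈ e, f v = i).card := by
    simp only [monoEdges, Finset.card_filter]
    exact Finset.sum_comm
  rw [swap, Finset.mul_sum, Finset.sum_congr rfl fun e he => ?_, Finset.sum_const, smul_eq_mul]
  · induction e with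
    | _ a b =>
      have hadj : G.Adj a b := by
        rw [SimpleGraph.mem_edgeFinset, SimpleGraph.mem_edgeSet] at he
        exact he
      have hab : a ≠ b := G.ne_of_adj hadj
      rw [show (Finset.filter (fun f => ∀ v ∈ s(a, b), f v = i) (profileColorings V s c))
          = Finset.filter (fun f => f a = i ∧ f b = i) (profileColorings V s c) from
        Finset.filter_congr fun f _ => Sym2.ball]
      exact S2 c hab i

lemma share_filter_empty (c : Fin s → ℕ) {i j : Fin s} (hij : i ≠ j) {e e' : Sym2 V}
    (hsh : ∃ v, v ∈ e ∧ v ∈ e') :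
    ((profileColorings V s c).filter fun f => (∀ v ∈ e, f v = i) ∧ ∀ v ∈ e', f v = j) = ∅ := by
  obtain ⟨v, hv, hv'⟩ := hsh
  rw [Finset.filter_eq_empty_iff]
  rintro f _ ⟨h1, h2⟩
  exact hij ((h1 v hv).symm.trans (h2 v hv'))

lemma sum_mono_mul (c : Fin s → ℕ) {i j : Fin s} (hij : i ≠ j) :
    (Fintype.card V).descFactorial 4 *
        ∑ f ∈ profileColorings V s c, monoEdges G f i * monoEdges G f j
      = ((G.edgeFinset ×ˢ G.edgeFinset).filter fun p => ¬∃ v, v ∈ p.1 ∧ v ∈ p.2).card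
        * ((profileColorings V s c).card * ((c i).descFactorial 2 * (c j).descFactorial 2)) := by
  have expand : ∀ f : V → Fin s, monoEdges G f i * monoEdges G f j
      = ∑ p ∈ G.edgeFinset ×ˢ G.edgeFinset,
          if (∀ v ∈ p.1, f v = i) ∧ ∀ v ∈ p.2, f v = j then 1 else 0 := by
    intro f
    rw [monoEdges, monoEdges, Finset.card_filter, Finset.card_filter, Finset.sum_mul_sum,
      Finset.sum_product]
    congr 1; ext e; congr 1; ext e'
    rw [ite_mul, one_mul, zero_mul, ← ite_and]
  have swap : ∑ f ∈ profileColorings V s c, monoEdges G f i * monoEdges G f j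
      = ∑ p ∈ G.edgeFinset ×ˢ G.edgeFinset,
          ((profileColorings V s c).filter fun f => (∀ v ∈ p.1, f v = i) ∧ ∀ v ∈ p.2, f v = j).card := by
    simp only [Finset.card_filter]
    rw [Finset.sum_congr rfl fun f _ => expand f]
    exact Finset.sum_comm
  rw [swap, Finset.mul_sum]
  rw [← Finset.sum_filter_add_sum_filter_not (G.edgeFinset ×ˢ G.edgeFinset)
    (fun p => ∃ v, v ∈ p.1 ∧ v ∈ p.2)]
  have hzero : ∀ p ∈ (G.edgeFinset ×ˢ G.edgeFinset).filter (fun p => ∃ v, v ∈ p.1 ∧ v ∈ p.2),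
      (Fintype.card V).descFactorial 4 *
        ((profileColorings V s c).filter fun f => (∀ v ∈ p.1, f v = i) ∧ ∀ v ∈ p.2, f v = j).card = 0 := by
    intro p hp
    rw [share_filter_empty c hij (Finset.mem_filter.1 hp).2, Finset.card_empty, Nat.mul_zero]
  rw [Finset.sum_congr rfl hzero, Finset.sum_const_zero, zero_add]
  rw [Finset.sum_congr rfl fun p hp => ?_, Finset.sum_const, smul_eq_mul]
  rw [Finset.mem_filter, Finset.mem_product] at hp
  obtain ⟨⟨he, he'⟩, hnsh⟩ := hp
  obtain ⟨p1, p2⟩ := p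
  induction p1 with
  | _ a b =>
    induction p2 with
    | _ a' b' =>
      simp only at he he' hnsh ⊢
      have hab : a ≠ b := G.ne_of_adj (by rwa [SimpleGraph.mem_edgeFinset, SimpleGraph.mem_edgeSet] at he)
      have hab' : a' ≠ b' := G.ne_of_adj (by rwa [SimpleGraph.mem_edgeFinset, SimpleGraph.mem_edgeSet] at he')
      push_neg at hnsh
      have h2 : a ≠ a' := fun h => hnsh a (by simp) (by simp [h])
      have h3 : a ≠ b' := fun h => hnsh a (by simp) (by simp [h])
      have h4 : b ≠ a' := fun h => hnsh b (by simp) (by simp [h])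
      have h5 : b ≠ b' := fun h => hnsh b (by simp) (by simp [h])
      rw [show (Finset.filter (fun f => (∀ v ∈ s(a, b), f v = i) ∧ ∀ v ∈ s(a', b'), f v = j)
            (profileColorings V s c))
          = Finset.filter (fun f => f a = i ∧ f b = i ∧ f a' = j ∧ f b' = j)
            (profileColorings V s c) from Finset.filter_congr fun f _ => ?_]
      · exact S4 c hab h2 h3 h4 h5 hab' hij
      · constructor
        · rintro ⟨hA, hB⟩
          rw [Sym2.ball] at hA hB
          exact ⟨hA.1, hA.2, hB.1, hB.2⟩
        · rintro ⟨x1, x2, y1, y2⟩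
          exact ⟨Sym2.ball.2 ⟨x1, x2⟩, Sym2.ball.2 ⟨y1, y2⟩⟩

end Aux5


section Aux6

variable {V : Type*} [Fintype V] [DecidableEq V] (G : SimpleGraph V) [DecidableRel G.Adj]

lemma sym2_exists_mem (e : Sym2 V) : ∃ v, v ∈ e := by
  induction e with
  | _ a b => exact ⟨a, by simp⟩

lemma D_count :
    ((G.edgeFinset ×ˢ G.edgeFinset).filter fun p => ¬∃ v, v ∈ p.1 ∧ v ∈ p.2).card
      + 2 * pi3 G + G.edgeFinset.card = G.edgeFinset.card * G.edgeFinset.card := by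
  classical
  have htot := Finset.card_filter_add_card_filter_not
    (s := G.edgeFinset ×ˢ G.edgeFinset) (p := fun p => ∃ v, v ∈ p.1 ∧ v ∈ p.2)
  rw [Finset.card_product] at htot
  -- split the "share" part into diagonal and off-diagonal
  set S := (G.edgeFinset ×ˢ G.edgeFinset).filter fun p => ∃ v, v ∈ p.1 ∧ v ∈ p.2 with hS
  have hsplit := Finset.card_filter_add_card_filter_not
    (s := S) (p := fun p => p.1 = p.2)
  -- diagonal part has card = number of edges
  have hdiag : (S.filter fun p => p.1 = p.2).card = G.edgeFinset.card := by
    apply Finset.card_bij (fun p _ => p.1)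
    · intro p hp
      simp only [hS, Finset.mem_filter, Finset.mem_product] at hp
      exact hp.1.1.1
    · intro p hp q hq h
      simp only [hS, Finset.mem_filter] at hp hq
      exact Prod.ext h (by rw [← hp.2, ← hq.2]; exact h)
    · intro e he
      obtain ⟨v, hv⟩ := sym2_exists_mem e
      refine ⟨(e, e), ?_, rfl⟩
      simp only [hS, Finset.mem_filter, Finset.mem_product]
      exact ⟨⟨⟨he, he⟩, ⟨v, hv, hv⟩⟩, trivial⟩
  -- off-diagonal part has card = 2 * pi3
  have hoff : (S.filter fun p => ¬p.1 = p.2).card = 2 * pi3 G := by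
    set X := S.filter fun p => ¬p.1 = p.2 with hX
    set P3 := (G.edgeFinset.powersetCard 2).filter fun p => ∃ v, ∀ e ∈ p, v ∈ e with hP3
    have hmap : ∀ p ∈ X, ({p.1, p.2} : Finset (Sym2 V)) ∈ P3 := by
      rintro ⟨e, e'⟩ hp
      simp only [hX, hS, Finset.mem_filter, Finset.mem_product] at hp
      obtain ⟨⟨⟨he, he'⟩, v, hv, hv'⟩, hne⟩ := hp
      simp only [hP3, Finset.mem_filter, Finset.mem_powersetCard]
      refine ⟨⟨?_, ?_⟩, v, ?_⟩
      · intro x hx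
        rcases Finset.mem_insert.1 hx with h | h
        · exact h ▸ he
        · exact (Finset.mem_singleton.1 h) ▸ he'
      · exact Finset.card_pair hne
      · intro x hx
        rcases Finset.mem_insert.1 hx with h | h
        · exact h ▸ hv
        · exact (Finset.mem_singleton.1 h) ▸ hv'
    rw [Finset.card_eq_sum_card_fiberwise hmap]
    rw [Finset.sum_congr rfl fun q hq => ?_, Finset.sum_const, smul_eq_mul, mul_comm]
    · rfl
    -- each fiber has exactly two elements
    simp only [hP3, Finset.mem_filter, Finset.mem_powersetCard] at hq
    obtain ⟨⟨hsub, hcard⟩, v, hv⟩ := hq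
    obtain ⟨e₁, e₂, hne, rfl⟩ := Finset.card_eq_two.1 hcard
    have he₁ : e₁ ∈ G.edgeFinset := hsub (by simp)
    have he₂ : e₂ ∈ G.edgeFinset := hsub (by simp)
    have hv₁ : v ∈ e₁ := hv e₁ (by simp)
    have hv₂ : v ∈ e₂ := hv e₂ (by simp)
    have : X.filter (fun p => ({p.1, p.2} : Finset (Sym2 V)) = {e₁, e₂})
        = ({(e₁, e₂), (e₂, e₁)} : Finset (Sym2 V × Sym2 V)) := by
      ext ⟨f₁, f₂⟩
      simp only [hX, hS, Finset.mem_filter, Finset.mem_product, Finset.mem_insert,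
        Finset.mem_singleton, Prod.mk.injEq]
      constructor
      · rintro ⟨⟨⟨⟨hf1, hf2⟩, hshare⟩, hne'⟩, hpair⟩
        have h1 : f₁ ∈ ({e₁, e₂} : Finset (Sym2 V)) := hpair ▸ (by simp)
        have h2 : f₂ ∈ ({e₁, e₂} : Finset (Sym2 V)) := hpair ▸ (by simp)
        simp only [Finset.mem_insert, Finset.mem_singleton] at h1 h2
        rcases h1 with rfl | rfl <;> rcases h2 with rfl | rfl
        · exact absurd rfl hne'
        · exact Or.inl ⟨rfl, rfl⟩
        · exact Or.inr ⟨rfl, rfl⟩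
        · exact absurd rfl hne'
      · rintro (⟨rfl, rfl⟩ | ⟨rfl, rfl⟩)
        · exact ⟨⟨⟨⟨he₁, he₂⟩, v, hv₁, hv₂⟩, hne⟩, rfl⟩
        · refine ⟨⟨⟨⟨he₂, he₁⟩, v, hv₂, hv₁⟩, Ne.symm hne⟩, ?_⟩
          rw [Finset.pair_comm]
    rw [this, Finset.card_insert_of_notMem (by simp [hne, Ne.symm hne]), Finset.card_singleton]
  omega

end Aux6


section Aux7

variable {V : Type*} [Fintype V] [DecidableEq V] {s : ℕ} {c : Fin s → ℕ}

lemma cov_expand (hN : ((profileColorings V s c).card : ℝ) ≠ 0) (X Y : (V → Fin s) → ℝ) :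
    _root_.expect V c (fun f => (X f - _root_.expect V c X) * (Y f - _root_.expect V c Y))
      = _root_.expect V c (fun f => X f * Y f) - _root_.expect V c X * _root_.expect V c Y := by
  unfold _root_.expect
  set N := ((profileColorings V s c).card : ℝ) with hNdef
  set A := ∑ f ∈ profileColorings V s c, X f with hA
  set B := ∑ f ∈ profileColorings V s c, Y f with hB
  have expand : ∀ f : V → Fin s, (X f - A / N) * (Y f - B / N)
      = X f * Y f - (A / N) * Y f - (B / N) * X f + (A / N) * (B / N) := fun f => by ring
  rw [Finset.sum_congr rfl fun f _ => expand f]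
  simp only [Finset.sum_add_distrib, Finset.sum_sub_distrib, ← Finset.mul_sum, ← hA, ← hB,
    Finset.sum_const, nsmul_eq_mul]
  rw [show ((profileColorings V s c).card : ℝ) = N from rfl]
  field_simp
  ring

lemma mul_vecMulVec {k : Type*} [Fintype k] (M : Matrix k k ℝ) (a b : k → ℝ) :
    M * Matrix.vecMulVec a b = Matrix.vecMulVec (M.mulVec a) b := by
  ext i j
  simp only [Matrix.mul_apply, Matrix.vecMulVec_apply, Matrix.mulVec, dotProduct,
    Finset.sum_mul]
  exact Finset.sum_congr rfl fun x _ => by ring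

lemma vecMulVec_mul {k : Type*} [Fintype k] (a b : k → ℝ) (M : Matrix k k ℝ) :
    Matrix.vecMulVec a b * M = Matrix.vecMulVec a (Matrix.vecMul b M) := by
  ext i j
  simp only [Matrix.mul_apply, Matrix.vecMulVec_apply, Matrix.vecMul, dotProduct,
    Finset.mul_sum]
  exact Finset.sum_congr rfl fun x _ => by ring

open Matrix in
lemma vecMulVec_mul_vecMulVec {k : Type*} [Fintype k] (a b e d : k → ℝ) :
    Matrix.vecMulVec a b * Matrix.vecMulVec e d
      = (b ⬝ᵥ e) • Matrix.vecMulVec a d := by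
  ext i j
  simp only [Matrix.mul_apply, Matrix.vecMulVec_apply, Matrix.smul_apply, dotProduct,
    smul_eq_mul, Finset.sum_mul, Finset.mul_sum]
  exact Finset.sum_congr rfl fun x _ => by ring

end Aux7

open Matrix in
/-- The covariance matrix `Σ` of `M = (M₁, …, M_s)` under the random coloring model is the
rank-one update `Σ = Q + γ(G)·u·uᵀ` of the diagonal matrix `Q` with entries
`qᵢ = Var(Mᵢ) − γ(G)·(cᵢ⁽²⁾)²`, where `uᵢ = cᵢ⁽²⁾`; moreover, if every `qᵢ ≠ 0` and
`1 + γ(G)·uᵀQ⁻¹u ≠ 0`, then `Σ` is invertible with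
`Σ⁻¹ = Q⁻¹ − (γ(G)/(1 + γ(G)·uᵀQ⁻¹u))·(Q⁻¹u)(Q⁻¹u)ᵀ` (Sherman–Morrison). -/
theorem covariance_matrix_structure {V : Type*} [Fintype V] [DecidableEq V]
    (G : SimpleGraph V) [DecidableRel G.Adj] (n m s : ℕ)
    (hn : Fintype.card V = n) (hn4 : 4 ≤ n) (hm : G.edgeFinset.card = m)
    (c : Fin s → ℕ) (hc : ∀ i, 0 < c i) (hsum : ∑ i, c i = n)
    (Sig : Matrix (Fin s) (Fin s) ℝ)
    (hSig : ∀ i j, Sig i j = expect V c (fun f =>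
        ((monoEdges G f i : ℝ) - expect V c (fun g => (monoEdges G g i : ℝ))) *
        ((monoEdges G f j : ℝ) - expect V c (fun g => (monoEdges G g j : ℝ)))))
    (u : Fin s → ℝ) (hu : ∀ i, u i = ((c i).descFactorial 2 : ℝ))
    (Q : Matrix (Fin s) (Fin s) ℝ)
    (hQ : Q = Matrix.diagonal fun i => Sig i i - gammaG G * (u i) ^ 2) :
    Sig = Q + gammaG G • Matrix.vecMulVec u u ∧
      ((∀ i, Q i i ≠ 0) → 1 + gammaG G * (u ⬝ᵥ Q⁻¹.mulVec u) ≠ 0 →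
        IsUnit Sig.det ∧
          Sig⁻¹ = Q⁻¹ - (gammaG G / (1 + gammaG G * (u ⬝ᵥ Q⁻¹.mulVec u))) •
            Matrix.vecMulVec (Q⁻¹.mulVec u) (Q⁻¹.mulVec u)) := by
  classical
  subst hn hm
  have hNpos : 0 < (profileColorings V s c).card :=
    Finset.card_pos.2 (profileColorings_nonempty c hsum)
  have hN : ((profileColorings V s c).card : ℝ) ≠ 0 := by positivity
  have hd2 : (((Fintype.card V).descFactorial 2 : ℕ) : ℝ) ≠ 0 := by
    rw [Nat.cast_ne_zero, Ne, Nat.descFactorial_eq_zero_iff_lt]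
    omega
  have hd4 : (((Fintype.card V).descFactorial 4 : ℕ) : ℝ) ≠ 0 := by
    rw [Nat.cast_ne_zero, Ne, Nat.descFactorial_eq_zero_iff_lt]
    omega
  have hE : ∀ i, _root_.expect V c (fun f => (monoEdges G f i : ℝ))
      = G.edgeFinset.card * u i / ((Fintype.card V).descFactorial 2) := by
    intro i
    have h := sum_mono G c i
    have hcast := congrArg (Nat.cast : ℕ → ℝ) h
    push_cast at hcast
    unfold _root_.expect
    rw [hu i, div_eq_div_iff hN hd2]
    linear_combination hcast
  set D := ((G.edgeFinset ×ˢ G.edgeFinset).filter fun p => ¬∃ v, v ∈ p.1 ∧ v ∈ p.2).card with hD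
  have hEE : ∀ i j, i ≠ j →
      _root_.expect V c (fun f => (monoEdges G f i : ℝ) * (monoEdges G f j : ℝ))
        = D * (u i * u j) / ((Fintype.card V).descFactorial 4) := by
    intro i j hij
    have h := sum_mono_mul G c hij
    have hcast := congrArg (Nat.cast : ℕ → ℝ) h
    push_cast at hcast
    unfold _root_.expect
    rw [hu i, hu j, div_eq_div_iff hN hd4]
    linear_combination hcast
  have hSig' : ∀ i j, i ≠ j → Sig i j = gammaG G * (u i * u j) := by
    intro i j hij
    rw [hSig i j, cov_expand hN, hE i, hE j, hEE i j hij]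
    have hDc := D_count G
    have hDr : (D : ℝ) + 2 * (pi3 G : ℝ) + G.edgeFinset.card
        = G.edgeFinset.card * G.edgeFinset.card := by exact_mod_cast hDc
    have hDr' : (D : ℝ) = (G.edgeFinset.card : ℝ) * G.edgeFinset.card - 2 * (pi3 G : ℝ)
        - G.edgeFinset.card := by linarith
    rw [hDr', gammaG, Nat.cast_choose_two]
    set d2r := (((Fintype.card V).descFactorial 2 : ℕ) : ℝ) with hd2r
    set d4r := (((Fintype.card V).descFactorial 4 : ℕ) : ℝ) with hd4r
    field_simp
    ring
  have part1 : Sig = Q + gammaG G • Matrix.vecMulVec u u := by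
    ext i j
    by_cases hij : i = j
    · subst hij
      simp only [hQ, Matrix.add_apply, Matrix.smul_apply, Matrix.vecMulVec_apply,
        Matrix.diagonal_apply_eq, smul_eq_mul]
      ring
    · simp only [hQ, Matrix.add_apply, Matrix.smul_apply, Matrix.vecMulVec_apply,
        Matrix.diagonal_apply_ne _ hij, smul_eq_mul, zero_add]
      exact hSig' i j hij
  refine ⟨part1, fun hq hdenom => ?_⟩
  set γ := gammaG G with hγ
  set w := Q⁻¹.mulVec u with hw
  set d := u ⬝ᵥ w with hdd
  set kk := γ / (1 + γ * d) with hkk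
  have hdetQ : IsUnit Q.det := by
    rw [hQ, Matrix.det_diagonal]
    refine isUnit_iff_ne_zero.2 (Finset.prod_ne_zero_iff.2 fun i _ => ?_)
    have := hq i
    rwa [hQ, Matrix.diagonal_apply_eq] at this
  have hQQinv : Q * Q⁻¹ = 1 := Matrix.mul_nonsing_inv Q hdetQ
  have hQw : Q.mulVec w = u := by
    rw [hw, Matrix.mulVec_mulVec, hQQinv, Matrix.one_mulVec]
  have hvecMul : Matrix.vecMul u Q⁻¹ = w := by
    rw [hw, hQ, Matrix.inv_diagonal]
    funext j
    simp only [Matrix.mulVec_diagonal, Matrix.vecMul_diagonal]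
    ring
  have hco : γ - (kk + γ * (kk * d)) = 0 := by
    rw [hkk]
    field_simp
    ring
  have hprod : Sig * (Q⁻¹ - kk • Matrix.vecMulVec w w) = 1 := by
    have expand : Sig * (Q⁻¹ - kk • Matrix.vecMulVec w w)
        = Q * Q⁻¹ + (γ - (kk + γ * (kk * d))) • Matrix.vecMulVec u w := by
      rw [part1]
      rw [Matrix.add_mul, Matrix.mul_sub, Matrix.mul_sub, Matrix.mul_smul, Matrix.mul_smul,
        Matrix.smul_mul, Matrix.smul_mul, _root_.mul_vecMulVec, _root_.vecMulVec_mul,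
        _root_.vecMulVec_mul_vecMulVec, hQw, hvecMul, ← hdd]
      module
    rw [expand, hco, zero_smul, add_zero, hQQinv]
  exact ⟨Matrix.isUnit_det_of_right_inverse hprod, Matrix.inv_eq_right_inv hprod⟩
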